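/- arXiv:2304.14989 — 2 statements merged into one kernel-verified Lean document; each statement's English description precedes it below -/
import Mathlib

section
/- Let X₁, X₂, … be i.i.d. random variables with values in [0,1] and mean μ, and let μ̂ₙ = (1/n)∑_{i=1}^n Xᵢ. Fix N ∈ ℕ⁺ and y ≥ 0. Then P(∃ n ≥ N : kl(μ̂ₙ, μ) ≥ y and μ̂ₙ < μ) ≤ e^{−Ny}. -/
/-!
Since `kl(·, μ)` decreases strictly on `[0, μ]`, the event forces some `μ̂ₙ` with `n ≥ N` below
the point `z < μ` at which `kl(z, μ) = y`. For `l ≤ 0` the normalised exponential tilts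
`Mₙ = ∏_{i<n} e^{l Xᵢ} / E e^{l Xᵢ}` form a nonnegative martingale with `M₀ = 1`, and since
`E e^{l X} ≤ 1 - μ + μ e^l` for `X ∈ [0, 1]`, on `{μ̂ₙ ≤ z}` one has
`Mₙ ≥ e^{n (l z - log (1 - μ + μ e^l))}`. The optimal tilt `l = log (z (1 - μ) / (μ (1 - z)))`
makes the exponent `n kl(z, μ) ≥ N y`, and Ville's (Doob's maximal) inequality bounds the
probability by `e^{-N y}`. No such `z` exists when `y = kl(0, μ)`, so the bound is proved for
every smaller `y` and passed to the limit.
-/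

open MeasureTheory ProbabilityTheory

noncomputable def klBin (p q : ℝ) : ℝ :=
  p * Real.log (p / q) + (1 - p) * Real.log ((1 - p) / (1 - q))

open Real Set Finset

lemma le_of_forall_Ioo_le_of_continuousAt {β : Type*} [TopologicalSpace β] [Preorder β]
    [ClosedIciTopology β] {f : ℝ → β} {a : β} {x y : ℝ} (hf : ContinuousAt f y) (hxy : x < y)
    (h : ∀ y' ∈ Ioo x y, a ≤ f y') : a ≤ f y :=
  ge_of_tendsto (hf.tendsto.mono_left nhdsWithin_le_nhds)
    (Filter.eventually_of_mem (Ioo_mem_nhdsLT hxy) h)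

section

variable {Ω : Type*} {mΩ : MeasurableSpace Ω} {P : Measure Ω}

lemma mul_log_div_of_ne_zero {q : ℝ} (hq : q ≠ 0) (p : ℝ) :
    p * log (p / q) = p * log p - p * log q := by
  rcases eq_or_ne p 0 with rfl | hp
  · simp
  · rw [log_div hp hq, mul_sub]

lemma klBin_eq_neg_binEntropy {μ : ℝ} (hμ0 : μ ≠ 0) (hμ1 : μ ≠ 1) (p : ℝ) :
    klBin p μ = -binEntropy p - p * log μ - (1 - p) * log (1 - μ) := by
  rw [klBin, binEntropy, mul_log_div_of_ne_zero hμ0,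
    mul_log_div_of_ne_zero (sub_ne_zero.2 hμ1.symm), log_inv, log_inv]
  ring

lemma klBin_self {μ : ℝ} (hμ0 : μ ≠ 0) (hμ1 : μ ≠ 1) : klBin μ μ = 0 := by
  simp [klBin, div_self hμ0, div_self (sub_ne_zero.2 hμ1.symm)]

lemma klBin_one_nonpos {p : ℝ} (hp0 : 0 ≤ p) (hp1 : p ≤ 1) : klBin p 1 ≤ 0 := by
  simpa [klBin] using mul_nonpos_of_nonneg_of_nonpos hp0 (log_nonpos hp0 hp1)

lemma continuous_klBin_left {μ : ℝ} (hμ0 : μ ≠ 0) (hμ1 : μ ≠ 1) :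
    Continuous fun p ↦ klBin p μ := by
  simp_rw [klBin_eq_neg_binEntropy hμ0 hμ1]
  fun_prop

lemma klBin_strictAntiOn {μ : ℝ} (hμ0 : 0 < μ) (hμ1 : μ < 1) :
    StrictAntiOn (fun p ↦ klBin p μ) (Icc 0 μ) := by
  refine strictAntiOn_of_deriv_neg (convex_Icc 0 μ)
    (continuous_klBin_left hμ0.ne' hμ1.ne).continuousOn fun p hp ↦ ?_
  rw [interior_Icc] at hp
  obtain ⟨hp0, hpμ⟩ := hp
  have hderiv : HasDerivAt (fun p ↦ -binEntropy p - p * log μ - (1 - p) * log (1 - μ))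
      (-(log (1 - p) - log p) - 1 * log μ - -1 * log (1 - μ)) p :=
    ((hasDerivAt_binEntropy hp0.ne' (by linarith)).fun_neg.sub
      ((hasDerivAt_id' p).mul_const (log μ))).sub
      (((hasDerivAt_id' p).const_sub 1).mul_const (log (1 - μ)))
  rw [funext (klBin_eq_neg_binEntropy hμ0.ne' hμ1.ne), hderiv.deriv]
  have := log_lt_log hp0 hpμ
  have := log_lt_log (by linarith) (by linarith : 1 - μ < 1 - p)
  linarith

lemma exists_klBin_eq_of_lt_klBin {μ y p : ℝ} (hμ1 : μ ≤ 1) (hy : 0 < y) (hp0 : 0 ≤ p)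
    (hpμ : p < μ) (hyp : y < klBin p μ) :
    ∃ z, 0 < z ∧ z ≤ μ ∧ μ < 1 ∧ klBin z μ = y ∧ ∀ q ∈ Icc 0 μ, y < klBin q μ → q < z := by
  have hμ0 : 0 < μ := hp0.trans_lt hpμ
  have hμ1' : μ < 1 := hμ1.lt_of_ne fun h ↦ by
    subst h
    linarith [klBin_one_nonpos hp0 hpμ.le]
  have hanti := klBin_strictAntiOn hμ0 hμ1'
  have hy_lt_zero : y < klBin 0 μ :=
    hyp.trans_le (hanti.antitoneOn ⟨le_rfl, hμ0.le⟩ ⟨hp0, hpμ.le⟩ hp0)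
  obtain ⟨z, hz_mem, hz : klBin z μ = y⟩ := intermediate_value_Icc' hμ0.le
    (continuous_klBin_left hμ0.ne' hμ1'.ne).continuousOn
    ⟨(klBin_self hμ0.ne' hμ1'.ne).symm ▸ hy.le, hy_lt_zero.le⟩
  refine ⟨z, hz_mem.1.lt_of_ne ?_, hz_mem.2, hμ1', hz, fun q hq hyq ↦ ?_⟩
  · rintro rfl
    exact hy_lt_zero.ne' hz
  · exact (hanti.lt_iff_gt hz_mem hq).1 (hz ▸ hyq)

lemma exists_nonpos_mul_sub_log_eq_klBin {z μ : ℝ} (hz0 : 0 < z) (hzμ : z ≤ μ) (hμ1 : μ < 1) :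
    ∃ l ≤ 0, l * z - log (1 - μ + μ * exp l) = klBin z μ := by
  have hμ0 : 0 < μ := hz0.trans_le hzμ
  have hz1 : 0 < 1 - z := by linarith
  have hμ1' : 0 < 1 - μ := by linarith
  -- the tilt turning `Bernoulli μ` into `Bernoulli z`, which maximises the left-hand side
  refine ⟨log (z * (1 - μ) / (μ * (1 - z))), log_nonpos (by positivity) ?_, ?_⟩
  · rw [div_le_one (by positivity)]
    nlinarith
  · have hnorm : 1 - μ + μ * (z * (1 - μ) / (μ * (1 - z))) = (1 - μ) / (1 - z) := by
      field_simp
      ring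
    rw [exp_log (by positivity), hnorm, klBin, log_div hz0.ne' hμ0.ne', log_div hz1.ne' hμ1'.ne',
      log_div hμ1'.ne' hz1.ne', log_div (by positivity) (by positivity),
      log_mul hz0.ne' hμ1'.ne', log_mul hμ0.ne' hz1.ne']
    ring

lemma exp_mul_le_one_sub_add_mul_exp {x : ℝ} (hx0 : 0 ≤ x) (hx1 : x ≤ 1) (t : ℝ) :
    exp (t * x) ≤ 1 - x + x * exp t := by
  have h := convexOn_exp.2 (mem_univ 0) (mem_univ t) (sub_nonneg.2 hx1) hx0 (sub_add_cancel 1 x)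
  simpa [mul_comm t x] using h

section BoundedMGF

variable [IsProbabilityMeasure P] {X : Ω → ℝ}

lemma integrable_one_sub_add_mul_exp (hX : AEMeasurable X P)
    (hb : ∀ᵐ ω ∂P, X ω ∈ Icc (0 : ℝ) 1) (t : ℝ) :
    Integrable (fun ω ↦ 1 - X ω + X ω * exp t) P :=
  have hXint := Integrable.of_mem_Icc 0 1 hX hb
  ((integrable_const 1).sub hXint).add (hXint.mul_const _)

lemma integrable_exp_mul_of_mem_Icc_zero_one (hX : AEMeasurable X P)
    (hb : ∀ᵐ ω ∂P, X ω ∈ Icc (0 : ℝ) 1) (t : ℝ) :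
    Integrable (fun ω ↦ exp (t * X ω)) P := by
  refine (integrable_one_sub_add_mul_exp hX hb t).mono'
    (measurable_exp.comp_aemeasurable (hX.const_mul t)).aestronglyMeasurable ?_
  filter_upwards [hb] with ω hω
  rw [norm_of_nonneg (exp_nonneg _)]
  exact exp_mul_le_one_sub_add_mul_exp hω.1 hω.2 t

lemma mgf_le_of_mem_Icc_zero_one (hX : AEMeasurable X P)
    (hb : ∀ᵐ ω ∂P, X ω ∈ Icc (0 : ℝ) 1) (t : ℝ) :
    mgf X P t ≤ 1 - P[X] + P[X] * exp t := by
  have hXint := Integrable.of_mem_Icc 0 1 hX hb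
  calc mgf X P t ≤ ∫ ω, (1 - X ω + X ω * exp t) ∂P :=
        integral_mono_ae (integrable_exp_mul_of_mem_Icc_zero_one hX hb t)
          (integrable_one_sub_add_mul_exp hX hb t)
          (by filter_upwards [hb] with ω hω using exp_mul_le_one_sub_add_mul_exp hω.1 hω.2 t)
    _ = 1 - P[X] + P[X] * exp t := by
      rw [integral_add (f := fun ω ↦ 1 - X ω) ((integrable_const 1).sub hXint)
          (hXint.mul_const _),
        integral_sub (f := fun _ ↦ (1 : ℝ)) (integrable_const 1) hXint, integral_mul_const]
      simp

end BoundedMGF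

theorem ProbabilityTheory.iIndepFun.martingale_prod_range {Y : ℕ → Ω → ℝ}
    (hind : iIndepFun Y P) (hY : ∀ i, Measurable (Y i))
    (hint : ∀ i, Integrable (Y i) P) (hmean : ∀ i, P[Y i] = 1) :
    Martingale (fun n ω ↦ ∏ i ∈ range n, Y i ω)
      (Filtration.natural (fun n ω ↦ ∏ i ∈ range n, Y i ω)
        fun _ ↦ (Finset.measurable_prod _ fun i _ ↦ hY i).stronglyMeasurable) P := by
  have := hind.isProbabilityMeasure
  set M : ℕ → Ω → ℝ := fun n ω ↦ ∏ i ∈ range n, Y i ω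
  set ℱ := Filtration.natural M
    fun _ ↦ (Finset.measurable_prod _ fun i _ ↦ hY i).stronglyMeasurable
  set past : ℕ → MeasurableSpace Ω := fun n ↦
    ⨆ j < n, MeasurableSpace.comap (Y j) inferInstance
  have hM_past : ∀ n, ∀ j ≤ n, Measurable[past n] (M j) := fun n j hj ↦
    Finset.measurable_prod _ fun i hi ↦ (comap_measurable (Y i)).mono
      (le_iSup₂ (f := fun j (_ : j < n) ↦ MeasurableSpace.comap (Y j) inferInstance) i
        ((mem_range.1 hi).trans_le hj)) le_rfl
  have hℱ_le_past : ∀ n, ℱ n ≤ past n := fun n ↦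
    iSup₂_le fun j hj ↦ (hM_past n j hj).comap_le
  have hindep_past : ∀ n, Indep (past n) (MeasurableSpace.comap (Y n) inferInstance) P := by
    intro n
    simpa using indep_iSup_of_disjoint (fun i ↦ (hY i).comap_le)
      ((iIndepFun_iff_iIndep _ _ _).1 hind) (S := Set.Iio n) (T := {n}) (by simp)
  have hM_succ : ∀ n, M (n + 1) = M n * Y n := fun n ↦ funext fun ω ↦ prod_range_succ _ _
  have hM_int : ∀ n, Integrable (M n) P := by
    intro n
    induction n with
    | zero => simp [M]
    | succ n ih =>
      rw [hM_succ]
      refine IndepFun.integrable_mul ?_ ih (hint n)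
      simpa only [M, Finset.prod_fn] using hind.indepFun_prod_range_succ hY n
  refine martingale_nat (Filtration.stronglyAdapted_natural _) hM_int fun n ↦ ?_
  have hYn : P[Y n | ℱ n] =ᵐ[P] fun _ ↦ 1 := by
    rw [← hmean n]
    exact condExp_indep_eq (hY n).comap_le (ℱ.le n) (comap_measurable (Y n)).stronglyMeasurable
      (indep_of_indep_of_le_left (hindep_past n) (hℱ_le_past n)).symm
  show M n =ᵐ[P] P[M (n + 1) | ℱ n]
  rw [hM_succ]
  filter_upwards [condExp_mul_of_stronglyMeasurable_left (Filtration.stronglyAdapted_natural _ n)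
    (hM_succ n ▸ hM_int (n + 1)) (hint n), hYn] with ω h1 h2
  rw [h1, Pi.mul_apply, h2, mul_one]

theorem MeasureTheory.Martingale.measure_exists_le_le [IsFiniteMeasure P] {f : ℕ → Ω → ℝ}
    {ℱ : Filtration ℕ mΩ} (hf : Martingale f ℱ P) (hnonneg : 0 ≤ f) {c : ℝ} (hc : 0 < c) :
    P {ω | ∃ n, c ≤ f n ω} ≤ ENNReal.ofReal (P[f 0] / c) := by
  set A : ℕ → Set Ω := fun n ↦
    {ω | c ≤ (range (n + 1)).sup' nonempty_range_add_one fun k ↦ f k ω}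
  have hA_mono : Monotone A := fun m n hmn ω (hω : c ≤ _) ↦
    show c ≤ _ from hω.trans (sup'_mono _ (range_subset_range.2 (by omega)) _)
  have hA_iUnion : {ω | ∃ n, c ≤ f n ω} = ⋃ n, A n := by
    ext ω
    simp only [A, mem_ofPred_eq, mem_iUnion, le_sup'_iff, Finset.mem_range]
    exact ⟨fun ⟨n, hn⟩ ↦ ⟨n, n, n.lt_succ_self, hn⟩, fun ⟨_, k, _, hk⟩ ↦ ⟨k, hk⟩⟩
  have hA_le : ∀ n, P (A n) ≤ ENNReal.ofReal (P[f 0] / c) := by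
    intro n
    have hdoob := maximal_ineq hf.submartingale hnonneg (ε := ⟨c, hc.le⟩) n
    have hint : ∫ ω in A n, f n ω ∂P ≤ P[f 0] :=
      calc ∫ ω in A n, f n ω ∂P ≤ ∫ ω, f n ω ∂P :=
            setIntegral_le_integral (hf.integrable n) (.of_forall (hnonneg n))
        _ = P[f 0] := by
          simpa using (hf.setIntegral_eq (Nat.zero_le n) MeasurableSet.univ).symm
    rw [ENNReal.ofReal_div_of_pos hc, ENNReal.le_div_iff_mul_le (by simp [hc]) (by simp),
      mul_comm, ENNReal.ofReal_eq_coe_nnreal hc.le]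
    exact hdoob.trans (ENNReal.ofReal_le_ofReal hint)
  rw [hA_iUnion, hA_mono.measure_iUnion]
  exact iSup_le hA_le

section Chernoff

variable {X : ℕ → Ω → ℝ} {μ : ℝ}

theorem measure_exists_mean_le_le_exp (hmeas : ∀ i, Measurable (X i)) (hindep : iIndepFun X P)
    (hbound : ∀ i, ∀ᵐ ω ∂P, X i ω ∈ Icc (0 : ℝ) 1) (hmean : ∀ i, P[X i] = μ)
    {l z : ℝ} (hl : l ≤ 0) (hrate : 0 ≤ l * z - log (1 - μ + μ * exp l)) (N : ℕ) :
    P {ω | ∃ n, N ≤ n ∧ (∑ i ∈ range n, X i ω) / n ≤ z}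
      ≤ ENNReal.ofReal (exp (-N * (l * z - log (1 - μ + μ * exp l)))) := by
  have := hindep.isProbabilityMeasure
  set b := 1 - μ + μ * exp l
  set a := l * z - log b
  set m : ℕ → ℝ := fun i ↦ mgf (X i) P l
  have hint : ∀ i, Integrable (fun ω ↦ exp (l * X i ω)) P := fun i ↦
    integrable_exp_mul_of_mem_Icc_zero_one (hmeas i).aemeasurable (hbound i) l
  have hm_pos : ∀ i, 0 < m i := fun i ↦ mgf_pos (hint i)
  have hm_le : ∀ i, m i ≤ b := fun i ↦ by
    simpa only [hmean i] using mgf_le_of_mem_Icc_zero_one (hmeas i).aemeasurable (hbound i) l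
  have hb : 0 < b := (hm_pos 0).trans_le (hm_le 0)
  -- normalising by the exact mgf, not by its bound `b`, makes the product a martingale
  set Y : ℕ → Ω → ℝ := fun i ω ↦ exp (l * X i ω) / m i
  have hYind : iIndepFun Y P := hindep.comp (fun i x ↦ exp (l * x) / m i) fun i ↦ by fun_prop
  have hYmean : ∀ i, P[Y i] = 1 := fun i ↦ by
    simp only [Y, integral_div]
    exact div_self (hm_pos i).ne'
  have hmart := hYind.martingale_prod_range (fun i ↦ by fun_prop)
    (fun i ↦ (hint i).div_const _) hYmean
  have hsub : {ω | ∃ n, N ≤ n ∧ (∑ i ∈ range n, X i ω) / n ≤ z}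
      ⊆ {ω | ∃ n, exp (N * a) ≤ ∏ i ∈ range n, Y i ω} := by
    rintro ω ⟨n, hNn, hmean_le⟩
    refine ⟨n, ?_⟩
    have hsum : ∑ i ∈ range n, X i ω ≤ n * z := by
      rcases n.eq_zero_or_pos with rfl | hn
      · simp
      · rwa [div_le_iff₀ (by positivity), mul_comm] at hmean_le
    calc exp (N * a) ≤ exp (n * a) :=
          exp_le_exp.2 (mul_le_mul_of_nonneg_right (by exact_mod_cast hNn) hrate)
      _ = exp (l * (n * z)) / b ^ n := by
        rw [mul_sub, exp_sub, exp_nat_mul (log b), exp_log hb, mul_left_comm]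
      _ ≤ exp (l * ∑ i ∈ range n, X i ω) / ∏ i ∈ range n, m i := by
        refine div_le_div₀ (exp_nonneg _) (exp_le_exp.2 (mul_le_mul_of_nonpos_left hsum hl))
          (prod_pos fun i _ ↦ hm_pos i) ?_
        simpa using prod_le_prod (s := range n) (fun i _ ↦ (hm_pos i).le) fun i _ ↦ hm_le i
      _ = ∏ i ∈ range n, Y i ω := by
        rw [prod_div_distrib, mul_sum, exp_sum]
  calc _ ≤ _ := measure_mono hsub
    _ ≤ ENNReal.ofReal (P[fun ω ↦ ∏ i ∈ range 0, Y i ω] / exp (N * a)) :=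
      hmart.measure_exists_le_le
        (fun n ω ↦ prod_nonneg fun i _ ↦ div_nonneg (exp_nonneg _) (hm_pos i).le) (exp_pos _)
    _ = ENNReal.ofReal (exp (-N * a)) := by
      simp [← exp_neg]

theorem measure_exists_mean_le_le_exp_klBin (hmeas : ∀ i, Measurable (X i))
    (hindep : iIndepFun X P) (hbound : ∀ i, ∀ᵐ ω ∂P, X i ω ∈ Icc (0 : ℝ) 1)
    (hmean : ∀ i, P[X i] = μ) {z : ℝ} (hz0 : 0 < z) (hzμ : z ≤ μ) (hμ1 : μ < 1) (N : ℕ) :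
    P {ω | ∃ n, N ≤ n ∧ (∑ i ∈ range n, X i ω) / n ≤ z}
      ≤ ENNReal.ofReal (exp (-N * klBin z μ)) := by
  have hμ0 : 0 < μ := hz0.trans_le hzμ
  obtain ⟨l, hl, hrate⟩ := exists_nonpos_mul_sub_log_eq_klBin hz0 hzμ hμ1
  have hkl : 0 ≤ klBin z μ := klBin_self hμ0.ne' hμ1.ne ▸
    (klBin_strictAntiOn hμ0 hμ1).antitoneOn ⟨hz0.le, hzμ⟩ ⟨hμ0.le, le_rfl⟩ hzμ
  rw [← hrate] at hkl ⊢
  exact measure_exists_mean_le_le_exp hmeas hindep hbound hmean hl hkl N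

theorem measure_exists_klBin_ge_le_exp_of_lt (hmeas : ∀ i, Measurable (X i))
    (hindep : iIndepFun X P) (hbound : ∀ i, ∀ᵐ ω ∂P, X i ω ∈ Icc (0 : ℝ) 1)
    (hmean : ∀ i, P[X i] = μ) (N : ℕ) {y y' : ℝ} (hy' : 0 < y') (hy'y : y' < y) :
    P {ω | ∃ n, N ≤ n ∧ klBin ((∑ i ∈ range n, X i ω) / n) μ ≥ y ∧
        (∑ i ∈ range n, X i ω) / n < μ}
      ≤ ENNReal.ofReal (exp (-N * y')) := by
  have := hindep.isProbabilityMeasure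
  have hmean_nonneg : ∀ᵐ ω ∂P, ∀ n, 0 ≤ (∑ i ∈ range n, X i ω) / n := by
    filter_upwards [ae_all_iff.2 hbound] with ω hω n
    exact div_nonneg (sum_nonneg fun i _ ↦ (hω i).1) n.cast_nonneg
  have hμ1 : μ ≤ 1 := hmean 0 ▸ (integral_mono_ae
    (Integrable.of_mem_Icc 0 1 (hmeas 0).aemeasurable (hbound 0)) (integrable_const 1)
    (by filter_upwards [hbound 0] with ω hω using hω.2)).trans_eq (by simp)
  by_cases hE : ∃ p, 0 ≤ p ∧ p < μ ∧ y' < klBin p μ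
  · obtain ⟨p, hp0, hpμ, hyp⟩ := hE
    obtain ⟨z, hz0, hzμ, hμ1', rfl, hlt⟩ := exists_klBin_eq_of_lt_klBin hμ1 hy' hp0 hpμ hyp
    refine (measure_mono_ae ?_).trans
      (measure_exists_mean_le_le_exp_klBin hmeas hindep hbound hmean hz0 hzμ hμ1' N)
    filter_upwards [hmean_nonneg] with ω hω
    rintro ⟨n, hNn, hkl, hlt'⟩
    exact ⟨n, hNn, (hlt _ ⟨hω n, hlt'.le⟩ (hy'y.trans_le hkl)).le⟩
  · push Not at hE
    refine (measure_mono_ae (t := ∅) ?_).trans (by simp)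
    filter_upwards [hmean_nonneg] with ω hω
    rintro ⟨n, -, hkl, hlt⟩
    exact (hE _ (hω n) hlt).not_gt (hy'y.trans_le hkl)

end Chernoff

end

theorem maximal_chernoff_lower_general {Ω : Type*} [MeasurableSpace Ω]
    (P : Measure Ω) [IsProbabilityMeasure P]
    (X : ℕ → Ω → ℝ) (hmeas : ∀ i, Measurable (X i))
    (hindep : iIndepFun X P)
    (μ : ℝ) (hbound : ∀ i, ∀ᵐ ω ∂P, X i ω ∈ Set.Icc (0:ℝ) 1)
    (hmean : ∀ i, ∫ ω, X i ω ∂P = μ)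
    (N : ℕ) (y : ℝ) :
    P {ω | ∃ n, N ≤ n ∧
        klBin ((∑ i ∈ Finset.range n, X i ω) / n) μ ≥ y ∧
        (∑ i ∈ Finset.range n, X i ω) / n < μ}
      ≤ ENNReal.ofReal (Real.exp (-(N : ℝ) * y)) := by
  rcases le_or_gt y 0 with hy | hy
  · exact prob_le_one.trans
      (ENNReal.one_le_ofReal.2 (one_le_exp (by nlinarith [N.cast_nonneg (α := ℝ)])))
  exact le_of_forall_Ioo_le_of_continuousAt (f := fun y ↦ ENNReal.ofReal (exp (-N * y)))
    (ENNReal.continuous_ofReal.comp (by fun_prop)).continuousAt hy fun y' hy' ↦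
      measure_exists_klBin_ge_le_exp_of_lt hmeas hindep hbound hmean N hy'.1 hy'.2

/-- Time-uniform lower-tail Chernoff bound in KL form: for i.i.d. `[0,1]`-valued
random variables with mean `μ`,
`P(∃ n ≥ N, kl(μ̂ₙ, μ) ≥ y ∧ μ̂ₙ < μ) ≤ e^{-Ny}`. -/
theorem maximal_chernoff_lower {Ω : Type*} [MeasurableSpace Ω]
    (P : Measure Ω) [IsProbabilityMeasure P]
    (X : ℕ → Ω → ℝ) (hmeas : ∀ i, Measurable (X i))
    (hindep : iIndepFun X P)
    (hident : ∀ i, IdentDistrib (X i) (X 0) P P)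
    (μ : ℝ) (hbound : ∀ i, ∀ᵐ ω ∂P, X i ω ∈ Set.Icc (0:ℝ) 1)
    (hmean : ∀ i, ∫ ω, X i ω ∂P = μ)
    (N : ℕ) (hN : 1 ≤ N) (y : ℝ) (hy : 0 ≤ y) :
    P {ω | ∃ n, N ≤ n ∧
        klBin ((∑ i ∈ Finset.range n, X i ω) / n) μ ≥ y ∧
        (∑ i ∈ Finset.range n, X i ω) / n < μ}
      ≤ ENNReal.ofReal (Real.exp (-(N : ℝ) * y)) :=
  maximal_chernoff_lower_general P X hmeas hindep μ hbound hmean N y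
end

section
/- Let X₁, X₂, … be i.i.d. random variables with values in [0,1] and mean μ, and let μ̂ₙ = (1/n)∑_{i=1}^n Xᵢ. Fix N ∈ ℕ⁺ and y ≥ 0. Then P(∃ n ≥ N : kl(μ̂ₙ, μ) ≥ y and μ̂ₙ > μ) ≤ e^{−Ny}. -/
/-!
For `λ ≥ 0` the partial products of the independent factors `exp (λ Xᵢ) / (1 - μ + μ e^λ)` form a
nonnegative supermartingale with initial mean at most `1`, because the chord of `exp` over `[0, 1]`
bounds `E[exp (λ Xᵢ)]` by `1 - μ + μ e^λ`. By Ville's maximal inequality the probability that it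
ever exceeds `e^{N kl(t, μ)}` is at most `e^{-N kl(t, μ)}`, and for the optimal `λ` it does so as
soon as `μ̂ₙ ≥ t` for some `n ≥ N`. The event of the theorem is almost surely contained in
`∃ n ≥ N, μ̂ₙ ≥ x₀`, where `x₀` is the least `p ∈ (μ, 1]` with `kl(p, μ) ≥ y`; the bound at `x₀`
follows from those at `t < x₀` by continuity of `kl(·, μ)`.
-/

open MeasureTheory ProbabilityTheory Finset InformationTheory

lemma klBin_eq_klFun {p q : ℝ} (hq0 : 0 < q) (hq1 : q < 1) :
    klBin p q = q * klFun (p / q) + (1 - q) * klFun ((1 - p) / (1 - q)) := by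
  have : 1 - q ≠ 0 := by linarith
  simp only [klBin, klFun]
  field_simp
  ring

lemma continuous_klBin_left_s13 {q : ℝ} (hq0 : 0 < q) (hq1 : q < 1) :
    Continuous fun p => klBin p q := by
  simp_rw [klBin_eq_klFun hq0 hq1]
  fun_prop

lemma klBin_nonneg {p q : ℝ} (hp0 : 0 ≤ p) (hp1 : p ≤ 1) (hq0 : 0 < q) (hq1 : q < 1) :
    0 ≤ klBin p q := by
  have h1q : 0 < 1 - q := by linarith
  have h1p : 0 ≤ 1 - p := by linarith
  rw [klBin_eq_klFun hq0 hq1]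
  exact add_nonneg (mul_nonneg hq0.le (klFun_nonneg (by positivity)))
    (mul_nonneg h1q.le (klFun_nonneg (by positivity)))

@[simp]
lemma klBin_self_s13 (q : ℝ) : klBin q q = 0 := by
  simp [klBin]

/-- The supremum over `λ ≥ 0` in `kl(p, q) = sup_λ (λ p - log (1 - q + q e^λ))` is attained. -/
lemma exists_nonneg_mul_sub_log_eq_klBin {p q : ℝ} (hq0 : 0 < q) (hqp : q < p) (hp1 : p < 1) :
    ∃ l : ℝ, 0 ≤ l ∧ l * p - Real.log (1 - q + q * Real.exp l) = klBin p q := by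
  have hp0 : 0 < p := hq0.trans hqp
  have h1p : 0 < 1 - p := by linarith
  have h1q : 0 < 1 - q := by linarith
  refine ⟨Real.log (p * (1 - q) / (q * (1 - p))), Real.log_nonneg ?_, ?_⟩
  · rw [le_div_iff₀ (by positivity)]
    nlinarith
  · have hmgf : 1 - q + q * (p * (1 - q) / (q * (1 - p))) = (1 - q) / (1 - p) := by
      field_simp
      ring
    rw [Real.exp_log (by positivity), hmgf, klBin, Real.log_div (by positivity) (by positivity),
      Real.log_mul hp0.ne' h1q.ne', Real.log_mul hq0.ne' h1p.ne', Real.log_div hp0.ne' hq0.ne',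
      Real.log_div h1p.ne' h1q.ne', Real.log_div h1q.ne' h1p.ne']
    ring

lemma exists_isLeast_klBin_ge {μ y : ℝ} (hμ : 0 < μ) (hy : 0 < y)
    (hS : (Set.Icc μ 1 ∩ {p | y ≤ klBin p μ}).Nonempty) :
    ∃ x₀, μ < x₀ ∧ IsLeast (Set.Icc μ 1 ∩ {p | y ≤ klBin p μ}) x₀ := by
  have hμS : ∀ p ∈ Set.Icc μ 1 ∩ {p | y ≤ klBin p μ}, μ < p := by
    rintro p ⟨⟨hμp, -⟩, hyp⟩
    refine hμp.lt_of_ne ?_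
    rintro rfl
    rw [Set.mem_ofPred_eq, klBin_self_s13] at hyp
    linarith
  obtain ⟨p, hp⟩ := hS
  obtain ⟨x₀, hx₀⟩ := (isCompact_Icc.inter_right (isClosed_le continuous_const
    (continuous_klBin_left_s13 hμ ((hμS p hp).trans_le hp.1.2)))).exists_isLeast ⟨p, hp⟩
  exact ⟨x₀, hμS x₀ hx₀.1, hx₀⟩

lemma mgf_le_of_mem_Icc_zero_one_s13 {Ω : Type*} [MeasurableSpace Ω] {P : Measure Ω}
    [IsProbabilityMeasure P] {X : Ω → ℝ} (hX : Measurable X)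
    (hbound : ∀ᵐ ω ∂P, X ω ∈ Set.Icc (0 : ℝ) 1) (l : ℝ) :
    mgf X P l ≤ 1 - P[X] + P[X] * Real.exp l := by
  have hX_int : Integrable X P := .of_mem_Icc 0 1 hX.aemeasurable hbound
  have hchord : ∀ x ∈ Set.Icc (0 : ℝ) 1, Real.exp (l * x) ≤ 1 - x + x * Real.exp l := by
    rintro x ⟨hx0, hx1⟩
    have := convexOn_exp.2 (Set.mem_univ 0) (Set.mem_univ l) (sub_nonneg.2 hx1) hx0 (by ring)
    simpa [smul_eq_mul, mul_comm x l] using this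
  have h_sub : Integrable (fun ω => 1 - X ω) P := (integrable_const 1).sub hX_int
  have h_mul : Integrable (fun ω => X ω * Real.exp l) P := hX_int.mul_const _
  calc mgf X P l ≤ ∫ ω, (1 - X ω + X ω * Real.exp l) ∂P :=
        integral_mono_ae (integrable_exp_mul_of_mem_Icc hX.aemeasurable hbound)
          (h_sub.add h_mul) (hbound.mono fun ω hω => hchord _ hω)
    _ = 1 - P[X] + P[X] * Real.exp l := by
        rw [integral_add h_sub h_mul, integral_sub (integrable_const 1) hX_int, integral_mul_const]
        simp

/-- **Ville's maximal inequality**. -/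
theorem MeasureTheory.Supermartingale.measure_exists_ge_le {Ω : Type*} {m0 : MeasurableSpace Ω}
    {μ : Measure Ω} [IsFiniteMeasure μ] {𝒢 : Filtration ℕ m0} {f : ℕ → Ω → ℝ}
    (hf : Supermartingale f 𝒢 μ) (hnonneg : 0 ≤ f) {c : ℝ} (hc : 0 < c) :
    μ {ω | ∃ n, c ≤ f n ω} ≤ ENNReal.ofReal ((∫ ω, f 0 ω ∂μ) / c) := by
  have hset : {ω | ∃ n, c ≤ f n ω} = ⋃ n, {ω | c ≤ f n ω} := by ext; simp
  rw [hset, measure_iUnion_eq_iSup_accumulate]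
  refine iSup_le fun n => ?_
  set τ : Ω → WithTop ℕ := fun ω => (hittingBtwn f (Set.Ici c) 0 n ω : ℕ) with hτ
  have hτ_stop : IsStoppingTime 𝒢 τ :=
    hf.stronglyAdapted.adapted.isStoppingTime_hittingBtwn measurableSet_Ici
  have hτ_le : ∀ ω, τ ω ≤ n := fun ω => by simpa [hτ] using hittingBtwn_le ω
  have hstop : ∫ ω, stoppedValue f τ ω ∂μ ≤ ∫ ω, f 0 ω ∂μ := by
    have := hf.neg.expected_stoppedValue_mono (isStoppingTime_const 𝒢 0) hτ_stop
      (fun ω => zero_le) hτ_le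
    simpa [stoppedValue, integral_neg] using this
  have hsub : Set.accumulate (fun n => {ω | c ≤ f n ω}) n ⊆ {ω | c ≤ stoppedValue f τ ω} := by
    intro ω hω
    obtain ⟨k, hk, hck⟩ := Set.mem_accumulate.1 hω
    exact stoppedValue_hittingBtwn_mem ⟨k, ⟨zero_le, hk⟩, hck⟩
  have hmarkov := mul_meas_ge_le_integral_of_nonneg
    (ae_of_all _ fun ω => hnonneg _ ω) (integrable_stoppedValue ℕ hτ_stop hf.integrable hτ_le) c
  calc μ (Set.accumulate _ n) ≤ μ {ω | c ≤ stoppedValue f τ ω} := measure_mono hsub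
    _ ≤ ENNReal.ofReal ((∫ ω, f 0 ω ∂μ) / c) := by
      rw [← ofReal_measureReal]
      exact ENNReal.ofReal_le_ofReal ((le_div_iff₀' hc).2 (hmarkov.trans hstop))

theorem ProbabilityTheory.iIndepFun.supermartingale_prod_range_succ {Ω : Type*}
    {m0 : MeasurableSpace Ω} {μ : Measure Ω} [IsProbabilityMeasure μ] {Y : ℕ → Ω → ℝ}
    (hY : ∀ i, Measurable (Y i)) (hindep : iIndepFun Y μ) (hY_nonneg : ∀ i ω, 0 ≤ Y i ω)
    (hY_int : ∀ i, Integrable (Y i) μ) (hY_le : ∀ i, ∫ ω, Y i ω ∂μ ≤ 1) :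
    Supermartingale (fun n => ∏ i ∈ range (n + 1), Y i)
      (Filtration.natural Y fun i => (hY i).stronglyMeasurable) μ := by
  set ℱ := Filtration.natural Y fun i => (hY i).stronglyMeasurable
  have hprod_succ : ∀ n, ∏ i ∈ range (n + 1 + 1), Y i = (∏ i ∈ range (n + 1), Y i) * Y (n + 1) :=
    fun n => prod_range_succ _ _
  have hint : ∀ n, Integrable (∏ i ∈ range (n + 1), Y i) μ := by
    intro n
    induction n with
    | zero => simpa using hY_int 0
    | succ n ih =>
      rw [hprod_succ]
      exact (hindep.indepFun_finsetProd_of_notMem hY (by simp)).integrable_mul ih (hY_int _)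
  have hadapted : StronglyAdapted ℱ (fun n => ∏ i ∈ range (n + 1), Y i) := fun n =>
    Finset.stronglyMeasurable_prod _ fun i hi =>
      (Filtration.stronglyAdapted_natural _ i).mono (ℱ.mono (Nat.lt_succ_iff.1 (mem_range.1 hi)))
  refine supermartingale_nat hadapted hint fun n => ?_
  have hM_nonneg : ∀ ω, 0 ≤ (∏ i ∈ range (n + 1), Y i) ω := fun ω => by
    rw [prod_apply]
    exact prod_nonneg fun i _ => hY_nonneg i ω
  filter_upwards [condExp_mul_of_stronglyMeasurable_left (m := ℱ n) (hadapted n)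
      (by rw [← hprod_succ]; exact hint (n + 1)) (hY_int (n + 1)),
    hindep.condExp_natural_ae_eq_of_lt (fun i => (hY i).stronglyMeasurable) n.lt_succ_self]
    with ω hmul hY_cond
  rw [hprod_succ, hmul, Pi.mul_apply, hY_cond]
  exact mul_le_of_le_one_right (hM_nonneg ω) (hY_le _)

lemma prod_range_exp_mul_div_eq (x : ℕ → ℝ) (l : ℝ) {r : ℝ} (hr : 0 < r) (n : ℕ) :
    ∏ i ∈ range n, Real.exp (l * x i) / r = Real.exp (l * ∑ i ∈ range n, x i - n * Real.log r) := by
  have hlog : n * Real.log r = ∑ _i ∈ range n, Real.log r := by simp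
  rw [mul_sum, hlog, ← sum_sub_distrib, Real.exp_sum]
  exact prod_congr rfl fun i _ => by rw [Real.exp_sub, Real.exp_log hr]

section SampleMean

variable {Ω : Type*} [MeasurableSpace Ω] {P : Measure Ω} {X : ℕ → Ω → ℝ}

lemma ae_avg_le_one (hbound : ∀ i, ∀ᵐ ω ∂P, X i ω ∈ Set.Icc (0 : ℝ) 1) :
    ∀ᵐ ω ∂P, ∀ n : ℕ, (∑ i ∈ range n, X i ω) / n ≤ 1 := by
  filter_upwards [ae_all_iff.2 hbound] with ω hω n
  refine div_le_one_of_le₀ ?_ n.cast_nonneg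
  simpa using sum_le_card_nsmul (range n) (X · ω) 1 fun i _ => (hω i).2

lemma measure_exists_avg_pos_eq_zero (hint : ∀ i, Integrable (X i) P)
    (hnonneg : ∀ i, 0 ≤ᵐ[P] X i) (hmean : ∀ i, P[X i] = 0) :
    P {ω | ∃ n, 0 < (∑ i ∈ range n, X i ω) / n} = 0 := by
  have hzero : ∀ᵐ ω ∂P, ∀ i, X i ω = 0 := ae_all_iff.2 fun i =>
    (integral_eq_zero_iff_of_nonneg_ae (hnonneg i) (hint i)).1 (hmean i)
  rw [measure_eq_zero_iff_ae_notMem]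
  filter_upwards [hzero] with ω hω ⟨n, hn⟩
  simp [hω] at hn

theorem measure_exists_le_avg_le_exp_klBin_of_lt_one [IsProbabilityMeasure P]
    (hmeas : ∀ i, Measurable (X i)) (hindep : iIndepFun X P)
    (hbound : ∀ i, ∀ᵐ ω ∂P, X i ω ∈ Set.Icc (0 : ℝ) 1)
    {μ : ℝ} (hmean : ∀ i, P[X i] = μ) (hμ : 0 < μ) {t : ℝ} (hμt : μ < t) (ht : t < 1)
    (N : ℕ) :
    P {ω | ∃ n, N ≤ n ∧ t ≤ (∑ i ∈ range n, X i ω) / n}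
      ≤ ENNReal.ofReal (Real.exp (-(N * klBin t μ))) := by
  obtain ⟨l, hl, hkl⟩ := exists_nonneg_mul_sub_log_eq_klBin hμ hμt ht
  set r := 1 - μ + μ * Real.exp l
  have hr : 0 < r := by have := Real.exp_pos l; nlinarith
  set Y : ℕ → Ω → ℝ := fun i ω => Real.exp (l * X i ω) / r
  have hY : ∀ i, Measurable (Y i) := fun i => by fun_prop
  have hY_int : ∀ i, Integrable (Y i) P := fun i =>
    (integrable_exp_mul_of_mem_Icc (hmeas i).aemeasurable (hbound i)).div_const r
  have hY_le : ∀ i, ∫ ω, Y i ω ∂P ≤ 1 := fun i => by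
    rw [integral_div, div_le_one hr]
    have := mgf_le_of_mem_Icc_zero_one_s13 (hmeas i) (hbound i) l
    rwa [hmean i] at this
  have hsuper := (hindep.comp (fun _ x => Real.exp (l * x) / r) fun _ => by fun_prop)
    |>.supermartingale_prod_range_succ hY (fun i ω => by positivity) hY_int hY_le
  have hville := hsuper.measure_exists_ge_le
    (fun n ω => by simp only [Pi.zero_apply, prod_apply]; positivity)
    (Real.exp_pos (N * klBin t μ))
  refine le_trans (measure_mono fun ω ⟨n, hNn, htn⟩ => ?_) (hville.trans ?_)
  · -- the empty average is `0 / 0 = 0 < t`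
    have hn : n ≠ 0 := by
      rintro rfl
      simp only [range_zero, sum_empty, CharP.cast_eq_zero, div_zero] at htn
      linarith
    obtain ⟨k, rfl⟩ := Nat.exists_eq_succ_of_ne_zero hn
    refine ⟨k, ?_⟩
    have hsum : (k + 1 : ℝ) * t ≤ ∑ i ∈ range (k + 1), X i ω := by
      rwa [le_div_iff₀ (by positivity), mul_comm, Nat.cast_succ] at htn
    have hNk : (N : ℝ) ≤ k + 1 := by exact_mod_cast hNn
    rw [prod_apply, prod_range_exp_mul_div_eq (X · ω) l hr, Real.exp_le_exp, Nat.cast_succ]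
    calc N * klBin t μ ≤ (k + 1) * klBin t μ :=
          mul_le_mul_of_nonneg_right hNk (klBin_nonneg (hμ.trans hμt).le ht.le hμ (hμt.trans ht))
      _ = (k + 1) * (l * t) - (k + 1) * Real.log r := by rw [← hkl]; ring
      _ ≤ l * ∑ i ∈ range (k + 1), X i ω - (k + 1) * Real.log r := by nlinarith
  · refine ENNReal.ofReal_le_ofReal ?_
    rw [Real.exp_neg, ← one_div]
    gcongr
    simpa using hY_le 0

theorem measure_exists_le_avg_le_exp_klBin [IsProbabilityMeasure P]
    (hmeas : ∀ i, Measurable (X i)) (hindep : iIndepFun X P)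
    (hbound : ∀ i, ∀ᵐ ω ∂P, X i ω ∈ Set.Icc (0 : ℝ) 1)
    {μ : ℝ} (hmean : ∀ i, P[X i] = μ) (hμ : 0 < μ) {t : ℝ} (hμt : μ < t) (ht : t ≤ 1)
    (N : ℕ) :
    P {ω | ∃ n, N ≤ n ∧ t ≤ (∑ i ∈ range n, X i ω) / n}
      ≤ ENNReal.ofReal (Real.exp (-(N * klBin t μ))) := by
  have hcont : ContinuousAt (fun s => ENNReal.ofReal (Real.exp (-(N * klBin s μ)))) t :=
    (ENNReal.continuous_ofReal.comp (Real.continuous_exp.comp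
      ((continuous_klBin_left_s13 hμ (hμt.trans_le ht)).const_mul _).neg)).continuousAt
  refine ge_of_tendsto (hcont.tendsto.mono_left (nhdsWithin_le_nhds (s := Set.Iio t))) ?_
  filter_upwards [Ioo_mem_nhdsLT hμt] with s ⟨hμs, hst⟩
  refine (measure_mono ?_).trans
    (measure_exists_le_avg_le_exp_klBin_of_lt_one hmeas hindep hbound hmean hμ hμs
      (hst.trans_le ht) N)
  rintro ω ⟨n, hn, h⟩
  exact ⟨n, hn, hst.le.trans h⟩

end SampleMean

theorem maximal_chernoff_upper_general {Ω : Type*} [MeasurableSpace Ω]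
    (P : Measure Ω) [IsProbabilityMeasure P]
    (X : ℕ → Ω → ℝ) (hmeas : ∀ i, Measurable (X i))
    (hindep : iIndepFun X P)
    (μ : ℝ) (hbound : ∀ i, ∀ᵐ ω ∂P, X i ω ∈ Set.Icc (0:ℝ) 1)
    (hmean : ∀ i, ∫ ω, X i ω ∂P = μ)
    (N : ℕ) (y : ℝ) :
    P {ω | ∃ n, N ≤ n ∧
        klBin ((∑ i ∈ Finset.range n, X i ω) / n) μ ≥ y ∧
        (∑ i ∈ Finset.range n, X i ω) / n > μ}
      ≤ ENNReal.ofReal (Real.exp (-(N : ℝ) * y)) := by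
  rcases le_or_gt y 0 with hy | hy
  · refine prob_le_one.trans ?_
    rw [← ENNReal.ofReal_one]
    exact ENNReal.ofReal_le_ofReal (Real.one_le_exp (by nlinarith [N.cast_nonneg (α := ℝ)]))
  have hμ_nonneg : 0 ≤ μ := hmean 0 ▸ integral_nonneg_of_ae ((hbound 0).mono fun ω h => h.1)
  rcases hμ_nonneg.eq_or_lt with rfl | hμ
  · refine (measure_mono_null (by rintro ω ⟨n, -, -, hpos⟩; exact ⟨n, hpos⟩)
      (measure_exists_avg_pos_eq_zero (fun i => .of_mem_Icc 0 1 (hmeas i).aemeasurable (hbound i))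
        (fun i => (hbound i).mono fun ω h => h.1) hmean)).trans_le zero_le
  set S := Set.Icc μ 1 ∩ {p | y ≤ klBin p μ}
  have hE : P {ω | ∃ n, N ≤ n ∧ klBin ((∑ i ∈ range n, X i ω) / n) μ ≥ y ∧
      (∑ i ∈ range n, X i ω) / n > μ} ≤ P {ω | ∃ n, N ≤ n ∧ (∑ i ∈ range n, X i ω) / n ∈ S} :=
    measure_mono_ae <| (ae_avg_le_one hbound).mono fun ω hω ⟨n, hn, hkl, hgt⟩ =>
      ⟨n, hn, ⟨hgt.le, hω n⟩, hkl⟩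
  rcases S.eq_empty_or_nonempty with hS | hS
  · exact hE.trans (by simp [hS])
  obtain ⟨x₀, hμx₀, ⟨⟨-, hx₀⟩, hyx₀⟩, hleast⟩ := exists_isLeast_klBin_ge hμ hy hS
  calc _ ≤ P {ω | ∃ n, N ≤ n ∧ x₀ ≤ (∑ i ∈ range n, X i ω) / n} :=
        hE.trans (measure_mono (by rintro ω ⟨n, hn, hS⟩; exact ⟨n, hn, hleast hS⟩))
    _ ≤ ENNReal.ofReal (Real.exp (-(N * klBin x₀ μ))) :=
        measure_exists_le_avg_le_exp_klBin hmeas hindep hbound hmean hμ hμx₀ hx₀ N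
    _ ≤ ENNReal.ofReal (Real.exp (-(N : ℝ) * y)) := by
        rw [neg_mul]
        gcongr
        exact hyx₀

/-- Time-uniform upper-tail Chernoff bound in KL form: for i.i.d. `[0,1]`-valued
random variables with mean `μ`,
`P(∃ n ≥ N, kl(μ̂ₙ, μ) ≥ y ∧ μ̂ₙ > μ) ≤ e^{-Ny}`. -/
theorem maximal_chernoff_upper {Ω : Type*} [MeasurableSpace Ω]
    (P : Measure Ω) [IsProbabilityMeasure P]
    (X : ℕ → Ω → ℝ) (hmeas : ∀ i, Measurable (X i))
    (hindep : iIndepFun X P)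
    (hident : ∀ i, IdentDistrib (X i) (X 0) P P)
    (μ : ℝ) (hbound : ∀ i, ∀ᵐ ω ∂P, X i ω ∈ Set.Icc (0:ℝ) 1)
    (hmean : ∀ i, ∫ ω, X i ω ∂P = μ)
    (N : ℕ) (hN : 1 ≤ N) (y : ℝ) (hy : 0 ≤ y) :
    P {ω | ∃ n, N ≤ n ∧
        klBin ((∑ i ∈ Finset.range n, X i ω) / n) μ ≥ y ∧
        (∑ i ∈ Finset.range n, X i ω) / n > μ}
      ≤ ENNReal.ofReal (Real.exp (-(N : ℝ) * y)) :=
  maximal_chernoff_upper_general P X hmeas hindep μ hbound hmean N y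
end
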